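/- For all integers n, j ≥ 1 and k ≥ 0, the number of set partitions of [2(n+k+j)+1] with no singleton blocks such that, in the standard representation, vertices 1,…,n+k are openers, vertex n+k+1 is a transitory, the next k vertices are closers, the next j vertices are openers, and the last n+j vertices are closers, equals n! · ( binom(n+k, k) · k! · k + binom(n+k, k+1) · (k+1)! ) · binom(n+j, j) · j!. -/

import Mathlib

/-- The set of arc endpoints of a collection of arcs. -/
def Endpoints (M : Finset (ℕ × ℕ)) : Finset ℕ := M.image Prod.fst ∪ M.image Prod.snd

/-- A partial matching of `[N] = {1,…,N}`: a set of arcs `(i,j)` with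
`1 ≤ i < j ≤ N` whose entries are pairwise disjoint. -/
def IsPartialMatching (N : ℕ) (M : Finset (ℕ × ℕ)) : Prop :=
  (∀ p ∈ M, 1 ≤ p.1 ∧ p.1 < p.2 ∧ p.2 ≤ N) ∧
  (∀ p ∈ M, ∀ q ∈ M, p ≠ q → p.1 ≠ q.1 ∧ p.1 ≠ q.2 ∧ p.2 ≠ q.1 ∧ p.2 ≠ q.2)

/-- A perfect matching of `[N]`: a partial matching whose arcs cover `{1,…,N}`. -/
def IsPerfectMatching (N : ℕ) (M : Finset (ℕ × ℕ)) : Prop :=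
  IsPartialMatching N M ∧ Endpoints M = Finset.Icc 1 N

/-- `A` is a `k`-crossing of `M`: a `k`-element subset of arcs listable as
`(i₁,j₁),…,(i_k,j_k)` with `i₁ < ⋯ < i_k < j₁ < ⋯ < j_k`. -/
def IsCrossing (k : ℕ) (M A : Finset (ℕ × ℕ)) : Prop :=
  A ⊆ M ∧ A.card = k ∧ (∀ p ∈ A, ∀ q ∈ A, p.1 < q.1 → p.2 < q.2) ∧
    (∀ p ∈ A, ∀ q ∈ A, p.1 < q.2)

/-- `A` is a `k`-nesting of `M`: a `k`-element subset of arcs listable as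
`(i₁,j₁),…,(i_k,j_k)` with `i₁ < ⋯ < i_k < j_k < ⋯ < j₁`. -/
def IsNesting (k : ℕ) (M A : Finset (ℕ × ℕ)) : Prop :=
  A ⊆ M ∧ A.card = k ∧ (∀ p ∈ A, ∀ q ∈ A, p.1 < q.1 → q.2 < p.2)

/-- `crNum k M` : the number of `k`-crossings of `M`. -/
noncomputable def crNum (k : ℕ) (M : Finset (ℕ × ℕ)) : ℕ :=
  Nat.card {A : Finset (ℕ × ℕ) // IsCrossing k M A}

/-- `neNum k M` : the number of `k`-nestings of `M`. -/
noncomputable def neNum (k : ℕ) (M : Finset (ℕ × ℕ)) : ℕ :=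
  Nat.card {A : Finset (ℕ × ℕ) // IsNesting k M A}

/-- The four types of vertices in the standard representation of a set partition. -/
inductive VType
  | opener | closer | transitory | fixedpt
deriving DecidableEq

/-- The arc set of the standard representation of a set partition `P` of `{1,…,N}`:
arcs join consecutive elements of a block. -/
def spArcs {N : ℕ} (P : Finpartition (Finset.Icc (1 : ℕ) N)) : Finset (ℕ × ℕ) :=
  ((Finset.Icc (1 : ℕ) N) ×ˢ (Finset.Icc (1 : ℕ) N)).filter fun q =>
    q.1 < q.2 ∧ ∃ B ∈ P.parts, q.1 ∈ B ∧ q.2 ∈ B ∧ ∀ x ∈ B, ¬(q.1 < x ∧ x < q.2)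

/-- The type of the vertex `i` in the standard representation of `P`. -/
def vtype {N : ℕ} (P : Finpartition (Finset.Icc (1 : ℕ) N)) (i : ℕ) : VType :=
  if i ∈ (spArcs P).image Prod.fst then
    (if i ∈ (spArcs P).image Prod.snd then VType.transitory else VType.opener)
  else
    (if i ∈ (spArcs P).image Prod.snd then VType.closer else VType.fixedpt)

/-- The (1-based) rank of `i` inside the finite set `E`. -/
def rankIn (E : Finset ℕ) (i : ℕ) : ℕ := (E.filter fun x => x ≤ i).card

/-!
A set partition is determined by its standard representation, and conversely every set of arcs
`i < j` in `[1, N]` with pairwise distinct left endpoints and pairwise distinct right endpoints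
is the standard representation of a partition: its blocks are the orbits of the map sending a
left endpoint to the right endpoint of its arc. The prescribed vertex types fix the set `L` of
left endpoints and the set `R` of right endpoints, so the partitions counted are the bijections
`σ : L → R` with `l < σ l`. Choosing partners for the closers in increasing order, the closer
`r` has `#{l ∈ L | l < r} - #{r' ∈ R | r' < r}` choices. Here the transitory has `n + k`
choices, the `t`-th closer of the first closer block `n + k + 1 - t`, and the `s`-th of the last
`n + j` closers `n + j + 1 - s`, for a total of `(n + k) · (n + k)! / n! · (n + j)!`.
-/

open Finset

theorem Finpartition.ext_of_part_eq {α : Type*} [DecidableEq α] {s : Finset α}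
    {P Q : Finpartition s} (h : ∀ a ∈ s, P.part a = Q.part a) : P = Q := by
  have parts_subset {P Q : Finpartition s} (h : ∀ a ∈ s, P.part a = Q.part a) :
      ∀ B ∈ P.parts, B ∈ Q.parts := by
    intro B hB
    obtain ⟨a, ha, rfl⟩ := P.part_surjOn hB
    rw [h a ha]
    exact Q.part_mem.2 ha
  ext B
  exact ⟨parts_subset h B, parts_subset (fun a ha => (h a ha).symm) B⟩

theorem Finset.image_erase_of_injOn {α β : Type*} [DecidableEq α] [DecidableEq β]
    {f : α → β} {s : Finset α} (hf : Set.InjOn f s) {a : α} (ha : a ∈ s) :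
    (s.erase a).image f = (s.image f).erase (f a) := by
  ext y
  simp only [mem_image, mem_erase]
  constructor
  · rintro ⟨x, ⟨hxa, hx⟩, rfl⟩
    exact ⟨fun h => hxa (hf hx ha h), x, hx, rfl⟩
  · rintro ⟨hy, x, hx, rfl⟩
    exact ⟨x, ⟨fun h => hy (h ▸ rfl), hx⟩, rfl⟩

instance Setoid.decidableRelKer {α β : Type*} [DecidableEq β] (f : α → β) :
    DecidableRel (Setoid.ker f) :=
  fun a b => decEq (f a) (f b)

section Iterate

variable {α : Type*} {f : α → α}

theorem reach_or_reach_of_iterate_eq_apply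
    (hf : ∀ a b, f a = f b → a = b ∨ f a = a ∨ f b = b) :
    ∀ (m : ℕ) (x y : α), f^[m] x = f y → (∃ i, f^[i] x = y) ∨ ∃ i, f^[i] y = x
  | 0, _, _, h => Or.inr ⟨1, h.symm⟩
  | m + 1, x, y, h => by
    rw [Function.iterate_succ_apply'] at h
    rcases hf _ _ h with h' | h' | h'
    · exact Or.inl ⟨m, h'⟩
    · exact reach_or_reach_of_iterate_eq_apply hf m x y (h'.symm.trans h)
    · exact Or.inl ⟨m + 1, by rw [Function.iterate_succ_apply', h, h']⟩

theorem reach_or_reach_of_iterate_eq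
    (hf : ∀ a b, f a = f b → a = b ∨ f a = a ∨ f b = b) :
    ∀ (m : ℕ) (x y : α), f^[m] x = f^[m] y → (∃ i, f^[i] x = y) ∨ ∃ i, f^[i] y = x
  | 0, _, _, h => Or.inl ⟨0, h⟩
  | m + 1, x, y, h => by
    rw [Function.iterate_succ_apply, Function.iterate_succ_apply] at h
    rcases reach_or_reach_of_iterate_eq hf m (f x) (f y) h with ⟨i, hi⟩ | ⟨i, hi⟩
    · rw [← Function.iterate_succ_apply] at hi
      exact reach_or_reach_of_iterate_eq_apply hf _ x y hi
    · rw [← Function.iterate_succ_apply] at hi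
      exact (reach_or_reach_of_iterate_eq_apply hf _ y x hi).symm

end Iterate

theorem isFixedPt_iterate_of_le {f : ℕ → ℕ} {N : ℕ} (hle : ∀ x, x ≤ f x)
    (hbound : ∀ x, f x ≠ x → f x ≤ N) (x : ℕ) : Function.IsFixedPt f (f^[N] x) := by
  have fixed_or_large : ∀ m, Function.IsFixedPt f (f^[m] x) ∨ x + m ≤ f^[m] x := by
    intro m
    induction m with
    | zero => exact Or.inr le_rfl
    | succ m ih =>
      rw [Function.iterate_succ_apply']
      rcases ih with h | h
      · exact Or.inl h.apply
      · rcases (hle (f^[m] x)).eq_or_lt with h' | h'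
        · exact Or.inl (by rw [← h']; exact h'.symm)
        · exact Or.inr (by omega)
  rcases fixed_or_large N with h | h
  · exact h
  by_contra hfix
  have := hbound _ hfix
  have := (hle (f^[N] x)).lt_of_ne (Ne.symm hfix)
  omega

def IsArcDiagram (N : ℕ) (M : Finset (ℕ × ℕ)) : Prop :=
  (∀ p ∈ M, 1 ≤ p.1 ∧ p.1 < p.2 ∧ p.2 ≤ N) ∧
    Set.InjOn Prod.fst (M : Set (ℕ × ℕ)) ∧ Set.InjOn Prod.snd (M : Set (ℕ × ℕ))

/-- The right endpoint of the arc of `M` leaving `x`, or `x` itself if there is none. -/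
def arcSucc (M : Finset (ℕ × ℕ)) (x : ℕ) : ℕ :=
  ((M.filter (·.1 = x)).image Prod.snd).min.getD x

/-- `N` steps reach the end of the orbit, since `arcSucc` strictly increases inside `[1, N]`. -/
def arcLast (N : ℕ) (M : Finset (ℕ × ℕ)) (x : ℕ) : ℕ := (arcSucc M)^[N] x

section ArcSucc

variable {M : Finset (ℕ × ℕ)} {x y : ℕ}

theorem arcSucc_eq_of_mem (hM : Set.InjOn Prod.fst (M : Set (ℕ × ℕ))) (h : (x, y) ∈ M) :
    arcSucc M x = y := by
  have : M.filter (·.1 = x) = {(x, y)} := by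
    ext p
    simp only [mem_filter, mem_singleton]
    constructor
    · rintro ⟨hp, rfl⟩
      exact hM hp h rfl
    · rintro rfl
      exact ⟨h, rfl⟩
  rw [arcSucc, this]
  rfl

theorem arcSucc_eq_self (h : ∀ y, (x, y) ∉ M) : arcSucc M x = x := by
  have : M.filter (·.1 = x) = ∅ := filter_eq_empty_iff.2 fun p hp hpx => h p.2 (hpx ▸ hp)
  rw [arcSucc, this]
  rfl

theorem mem_of_arcSucc_ne (hM : Set.InjOn Prod.fst (M : Set (ℕ × ℕ))) (h : arcSucc M x ≠ x) :
    (x, arcSucc M x) ∈ M := by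
  by_cases hx : ∃ y, (x, y) ∈ M
  · obtain ⟨y, hy⟩ := hx
    rwa [arcSucc_eq_of_mem hM hy]
  · exact absurd (arcSucc_eq_self (not_exists.1 hx)) h

end ArcSucc

namespace IsArcDiagram

variable {N : ℕ} {M : Finset (ℕ × ℕ)}

theorem le_arcSucc (hM : IsArcDiagram N M) (x : ℕ) : x ≤ arcSucc M x := by
  by_cases h : arcSucc M x = x
  · exact h.ge
  · exact (hM.1 _ (mem_of_arcSucc_ne hM.2.1 h)).2.1.le

theorem arcSucc_le_of_ne (hM : IsArcDiagram N M) {x : ℕ} (h : arcSucc M x ≠ x) :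
    arcSucc M x ≤ N :=
  (hM.1 _ (mem_of_arcSucc_ne hM.2.1 h)).2.2

theorem iterate_arcSucc_le_iterate (hM : IsArcDiagram N M) (x : ℕ) {i j : ℕ} (hij : i ≤ j) :
    (arcSucc M)^[i] x ≤ (arcSucc M)^[j] x :=
  Function.monotone_iterate_of_id_le hM.le_arcSucc hij x

theorem arcSucc_eq_arcSucc (hM : IsArcDiagram N M) {a b : ℕ}
    (h : arcSucc M a = arcSucc M b) : a = b ∨ arcSucc M a = a ∨ arcSucc M b = b := by
  by_contra! hne
  have ha := mem_of_arcSucc_ne hM.2.1 hne.2.1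
  have hb := mem_of_arcSucc_ne hM.2.1 hne.2.2
  rw [h] at ha
  exact hne.1 (congrArg Prod.fst (hM.2.2 ha hb rfl))

theorem arcSucc_arcLast (hM : IsArcDiagram N M) (x : ℕ) :
    arcSucc M (arcLast N M x) = arcLast N M x :=
  isFixedPt_iterate_of_le hM.le_arcSucc (fun _ => hM.arcSucc_le_of_ne) x

theorem arcLast_arcSucc (hM : IsArcDiagram N M) (x : ℕ) :
    arcLast N M (arcSucc M x) = arcLast N M x := by
  rw [arcLast, ← Function.iterate_succ_apply, Function.iterate_succ_apply']
  exact hM.arcSucc_arcLast x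

theorem reach_of_arcLast_eq (hM : IsArcDiagram N M) {x y : ℕ}
    (h : arcLast N M x = arcLast N M y) :
    (∃ i, (arcSucc M)^[i] x = y) ∨ ∃ i, (arcSucc M)^[i] y = x :=
  reach_or_reach_of_iterate_eq (fun _ _ => hM.arcSucc_eq_arcSucc) N x y h

theorem mem_and_arcSucc_le_of_arcLast_eq (hM : IsArcDiagram N M) {a x : ℕ}
    (h : arcLast N M a = arcLast N M x) (hax : a < x) :
    (a, arcSucc M a) ∈ M ∧ arcSucc M a ≤ x := by
  rcases hM.reach_of_arcLast_eq h with ⟨_ | i, hi⟩ | ⟨i, hi⟩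
  · simp only [Function.iterate_zero, id_eq] at hi
    omega
  · have hmove : arcSucc M a ≠ a := fun hfix => by
      rw [Function.iterate_fixed hfix] at hi
      omega
    exact ⟨mem_of_arcSucc_ne hM.2.1 hmove,
      hi ▸ hM.iterate_arcSucc_le_iterate a (Nat.le_add_left 1 i)⟩
  · have := hi ▸ hM.iterate_arcSucc_le_iterate x (Nat.zero_le i)
    simp only [Function.iterate_zero, id_eq] at this
    omega

end IsArcDiagram

section StandardRepresentation

variable {N : ℕ}

theorem mem_spArcs_iff {P : Finpartition (Icc 1 N)} {a b : ℕ} :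
    (a, b) ∈ spArcs P ↔ a ∈ Icc 1 N ∧ b ∈ Icc 1 N ∧ a < b ∧ b ∈ P.part a ∧
      ∀ x ∈ P.part a, ¬(a < x ∧ x < b) := by
  simp only [spArcs, mem_filter, mem_product]
  constructor
  · rintro ⟨⟨ha, hb⟩, hab, B, hB, haB, hbB, hbet⟩
    rw [P.part_eq_of_mem hB haB]
    exact ⟨ha, hb, hab, hbB, hbet⟩
  · rintro ⟨ha, hb, hab, hbB, hbet⟩
    exact ⟨⟨ha, hb⟩, hab, P.part a, P.part_mem.2 ha, P.mem_part ha, hbB, hbet⟩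

theorem isArcDiagram_spArcs (P : Finpartition (Icc 1 N)) : IsArcDiagram N (spArcs P) := by
  refine ⟨fun p hp => ?_, ?_, ?_⟩
  · obtain ⟨ha, hb, hab, -⟩ := mem_spArcs_iff.1 hp
    simp only [mem_Icc] at ha hb
    omega
  · rintro ⟨a, b⟩ hp ⟨_, b'⟩ hq (rfl : a = _)
    obtain ⟨-, -, hab, hb, hbet⟩ := mem_spArcs_iff.1 hp
    obtain ⟨-, -, hab', hb', hbet'⟩ := mem_spArcs_iff.1 hq
    rcases lt_trichotomy b b' with h | rfl | h
    · exact absurd ⟨hab, h⟩ (hbet' b hb)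
    · rfl
    · exact absurd ⟨hab', h⟩ (hbet b' hb')
  · rintro ⟨a, b⟩ hp ⟨a', _⟩ hq (rfl : b = _)
    obtain ⟨ha, -, hab, hb, hbet⟩ := mem_spArcs_iff.1 hp
    obtain ⟨ha', -, hab', hb', hbet'⟩ := mem_spArcs_iff.1 hq
    have hpart : P.part a = P.part a' :=
      (P.part_eq_of_mem (P.part_mem.2 ha) hb).symm.trans (P.part_eq_of_mem (P.part_mem.2 ha') hb')
    rcases lt_trichotomy a a' with h | rfl | h
    · exact absurd ⟨h, hab'⟩ (hbet a' (hpart ▸ P.mem_part ha'))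
    · rfl
    · exact absurd ⟨h, hab⟩ (hbet' a (hpart ▸ P.mem_part ha))

/-- The partition of `[1, N]` whose blocks are the orbits of `arcSucc M`. -/
def ofArcDiagram (N : ℕ) (M : Finset (ℕ × ℕ)) : Finpartition (Icc 1 N) :=
  Finpartition.ofSetSetoid (Setoid.ker (arcLast N M)) (Icc 1 N)

theorem mem_part_ofArcDiagram {M : Finset (ℕ × ℕ)} {a b : ℕ} :
    b ∈ (ofArcDiagram N M).part a ↔
      a ∈ Icc 1 N ∧ b ∈ Icc 1 N ∧ arcLast N M a = arcLast N M b :=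
  Finpartition.mem_part_ofSetSetoid_iff_rel _

theorem spArcs_ofArcDiagram {M : Finset (ℕ × ℕ)} (hM : IsArcDiagram N M) :
    spArcs (ofArcDiagram N M) = M := by
  have mem_Icc_of_mem {a b : ℕ} (h : (a, b) ∈ M) : a ∈ Icc 1 N ∧ b ∈ Icc 1 N := by
    have := hM.1 _ h
    simp only [mem_Icc]
    omega
  ext ⟨a, b⟩
  simp only [mem_spArcs_iff, mem_part_ofArcDiagram]
  constructor
  · rintro ⟨ha, -, hab, ⟨-, -, hlast⟩, hbet⟩
    obtain ⟨harc, hle⟩ := hM.mem_and_arcSucc_le_of_arcLast_eq hlast hab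
    rcases hle.eq_or_lt with heq | hlt
    · rwa [heq] at harc
    · exact absurd ⟨(hM.1 _ harc).2.1, hlt⟩
        (hbet _ ⟨ha, (mem_Icc_of_mem harc).2, (hM.arcLast_arcSucc a).symm⟩)
  · intro h
    obtain ⟨ha, hb⟩ := mem_Icc_of_mem h
    have hsucc := arcSucc_eq_of_mem hM.2.1 h
    refine ⟨ha, hb, (hM.1 _ h).2.1, ⟨ha, hb, by rw [← hsucc, hM.arcLast_arcSucc]⟩, ?_⟩
    rintro x ⟨-, -, hlast⟩ ⟨hax, hxb⟩
    have := (hM.mem_and_arcSucc_le_of_arcLast_eq hlast hax).2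
    omega

section

variable {P : Finpartition (Icc 1 N)} {a b w z : ℕ}

theorem arcSucc_spArcs_mem_part (hw : w ∈ P.part a) : arcSucc (spArcs P) w ∈ P.part a := by
  by_cases h : arcSucc (spArcs P) w = w
  · rwa [h]
  · have hpart : P.part w = P.part a :=
      P.part_eq_of_mem (P.part_mem.2 (P.part_nonempty.1 ⟨w, hw⟩)) hw
    exact hpart ▸ (mem_spArcs_iff.1 (mem_of_arcSucc_ne (isArcDiagram_spArcs P).2.1 h)).2.2.2.1

theorem arcLast_spArcs_mem_part (hw : w ∈ P.part a) : arcLast N (spArcs P) w ∈ P.part a :=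
  Function.Iterate.rec (· ∈ P.part a) hw (fun _ => arcSucc_spArcs_mem_part) N

theorem le_of_arcSucc_spArcs_eq_self (hw : w ∈ P.part a) (hfix : arcSucc (spArcs P) w = w)
    (hz : z ∈ P.part a) : z ≤ w := by
  by_contra! hwz
  set S := (P.part a).filter (w < ·)
  have hS : S.Nonempty := ⟨z, mem_filter.2 ⟨hz, hwz⟩⟩
  obtain ⟨hc, hwc⟩ := mem_filter.1 (S.min'_mem hS)
  have hpart : P.part w = P.part a :=
    P.part_eq_of_mem (P.part_mem.2 (P.part_nonempty.1 ⟨w, hw⟩)) hw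
  have harc : (w, S.min' hS) ∈ spArcs P :=
    mem_spArcs_iff.2 ⟨P.part_subset a hw, P.part_subset a hc, hwc, hpart ▸ hc,
      fun y hy ⟨hwy, hyc⟩ => (S.min'_le y (mem_filter.2 ⟨hpart ▸ hy, hwy⟩)).not_gt hyc⟩
  have := arcSucc_eq_of_mem (isArcDiagram_spArcs P).2.1 harc
  omega

theorem arcLast_spArcs_eq_iff (ha : a ∈ Icc 1 N) (hb : b ∈ Icc 1 N) :
    arcLast N (spArcs P) a = arcLast N (spArcs P) b ↔ b ∈ P.part a := by
  constructor
  · intro h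
    have hpart := P.eq_of_mem_parts (P.part_mem.2 hb) (P.part_mem.2 ha)
      (h ▸ arcLast_spArcs_mem_part (P.mem_part hb)) (arcLast_spArcs_mem_part (P.mem_part ha))
    exact hpart ▸ P.mem_part hb
  · intro h
    have hfix := (isArcDiagram_spArcs P).arcSucc_arcLast
    have ha' := arcLast_spArcs_mem_part (P.mem_part ha)
    have hb' := arcLast_spArcs_mem_part h
    exact le_antisymm (le_of_arcSucc_spArcs_eq_self hb' (hfix b) ha')
      (le_of_arcSucc_spArcs_eq_self ha' (hfix a) hb')

theorem ofArcDiagram_spArcs (P : Finpartition (Icc 1 N)) : ofArcDiagram N (spArcs P) = P := by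
  refine Finpartition.ext_of_part_eq fun a ha => ?_
  ext b
  rw [mem_part_ofArcDiagram]
  constructor
  · rintro ⟨-, hb, h⟩
    exact (arcLast_spArcs_eq_iff ha hb).1 h
  · intro h
    have hb := P.part_subset a h
    exact ⟨ha, hb, (arcLast_spArcs_eq_iff ha hb).2 h⟩

end

variable (N) in
def spArcsEquiv : Finpartition (Icc 1 N) ≃ {M // IsArcDiagram N M} where
  toFun P := ⟨spArcs P, isArcDiagram_spArcs P⟩
  invFun M := ofArcDiagram N M
  left_inv := ofArcDiagram_spArcs
  right_inv M := Subtype.ext (spArcs_ofArcDiagram M.2)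

end StandardRepresentation

/-- The graph of a bijection `σ : L → R` with `l < σ l` for all `l`. -/
def IsIncMatching (L R : Finset ℕ) (M : Finset (ℕ × ℕ)) : Prop :=
  M.image Prod.fst = L ∧ M.image Prod.snd = R ∧ Set.InjOn Prod.fst (M : Set (ℕ × ℕ)) ∧
    Set.InjOn Prod.snd (M : Set (ℕ × ℕ)) ∧ ∀ p ∈ M, p.1 < p.2

open Classical in
noncomputable def incMatchings (L R : Finset ℕ) : Finset (Finset (ℕ × ℕ)) :=
  (L ×ˢ R).powerset.filter (IsIncMatching L R)

section IncMatching

variable {D M : Finset (ℕ × ℕ)} {L R : Finset ℕ} {l r : ℕ}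

theorem mem_incMatchings : M ∈ incMatchings L R ↔ IsIncMatching L R M := by
  classical
  simp only [incMatchings, mem_filter, mem_powerset, and_iff_right_iff_imp]
  rintro ⟨hL, hR, -⟩ p hp
  exact mem_product.2 ⟨hL ▸ mem_image_of_mem _ hp, hR ▸ mem_image_of_mem _ hp⟩

theorem incMatchings_empty : incMatchings ∅ ∅ = {∅} := by
  ext M
  rw [mem_incMatchings, mem_singleton]
  constructor
  · exact fun h => image_eq_empty.1 h.1
  · rintro rfl
    simp [IsIncMatching]

theorem IsIncMatching.erase (hM : IsIncMatching L R M) (h : (l, r) ∈ M) :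
    IsIncMatching (L.erase l) (R.erase r) (M.erase (l, r)) := by
  obtain ⟨hL, hR, hfst, hsnd, hlt⟩ := hM
  have hsub : (↑(M.erase (l, r)) : Set (ℕ × ℕ)) ⊆ M := coe_subset.2 (erase_subset _ _)
  exact ⟨by rw [image_erase_of_injOn hfst h, hL], by rw [image_erase_of_injOn hsnd h, hR],
    hfst.mono hsub, hsnd.mono hsub, fun p hp => hlt p (mem_of_mem_erase hp)⟩

theorem IsIncMatching.insert (hD : IsIncMatching (L.erase l) (R.erase r) D) (hl : l ∈ L)
    (hr : r ∈ R) (hlr : l < r) : IsIncMatching L R (insert (l, r) D) := by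
  obtain ⟨hL, hR, hfst, hsnd, hlt⟩ := hD
  have hl' : l ∉ Prod.fst '' (D : Set (ℕ × ℕ)) := by
    rw [← coe_image, hL]
    simp
  have hr' : r ∉ Prod.snd '' (D : Set (ℕ × ℕ)) := by
    rw [← coe_image, hR]
    simp
  have hnot : (l, r) ∉ (D : Set (ℕ × ℕ)) := fun h => hl' ⟨_, h, rfl⟩
  refine ⟨by rw [image_insert, hL, insert_erase hl], by rw [image_insert, hR, insert_erase hr],
    ?_, ?_, forall_mem_insert _ _ _ |>.2 ⟨hlr, hlt⟩⟩
  · rw [coe_insert, Set.injOn_insert hnot]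
    exact ⟨hfst, hl'⟩
  · rw [coe_insert, Set.injOn_insert hnot]
    exact ⟨hsnd, hr'⟩

theorem incMatchings_eq_biUnion (hr : r ∈ R) :
    incMatchings L R = (L.filter (· < r)).biUnion fun l =>
      (incMatchings (L.erase l) (R.erase r)).image (insert (l, r)) := by
  ext M
  simp only [mem_biUnion, mem_image, mem_filter, mem_incMatchings]
  constructor
  · intro hM
    obtain ⟨⟨l, r⟩, hp, rfl⟩ := mem_image.1 (hM.2.1 ▸ hr)
    exact ⟨l, ⟨hM.1 ▸ mem_image_of_mem _ hp, hM.2.2.2.2 _ hp⟩, M.erase (l, _), hM.erase hp,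
      insert_erase hp⟩
  · rintro ⟨l, ⟨hl, hlr⟩, D, hD, rfl⟩
    exact hD.insert hl hr hlr

theorem card_incMatchings_eq_sum (hr : r ∈ R) :
    #(incMatchings L R) = ∑ l ∈ L.filter (· < r), #(incMatchings (L.erase l) (R.erase r)) := by
  rw [incMatchings_eq_biUnion hr, card_biUnion]
  · refine sum_congr rfl fun l _ => card_image_of_injOn fun D hD D' hD' h => ?_
    have hnot {D} (hD : D ∈ incMatchings (L.erase l) (R.erase r)) : (l, r) ∉ D := fun hmem => by
      have := (mem_incMatchings.1 hD).1 ▸ mem_image_of_mem Prod.fst hmem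
      simp at this
    rw [← erase_insert (hnot hD), ← erase_insert (hnot hD'), h]
  · intro l hl l' hl' hne
    simp only [Function.onFun, disjoint_left, mem_image]
    rintro M ⟨D, hD, rfl⟩ ⟨D', hD', hDD'⟩
    have hM := (mem_incMatchings.1 hD).insert (mem_filter.1 hl).1 hr (mem_filter.1 hl).2
    have := hM.2.2.2.1 (mem_insert_self _ _) (hDD' ▸ mem_insert_self _ _ : (l', r) ∈ _) rfl
    exact hne (congrArg Prod.fst this)

/-- Match the closers in increasing order: `r` can take any opener below it not yet used by the
smaller closers. When no such opener is left the truncated subtraction gives the factor `0`. -/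
theorem card_incMatchings (hLR : #L = #R) :
    #(incMatchings L R) = ∏ r ∈ R, (#(L.filter (· < r)) - #(R.filter (· < r))) := by
  induction R using Finset.induction_on_min generalizing L with
  | empty =>
    rw [card_eq_zero.1 hLR, incMatchings_empty]
    rfl
  | insert a s has ih =>
    have ha : a ∉ s := fun h => lt_irrefl a (has a h)
    rw [card_incMatchings_eq_sum (mem_insert_self a s), erase_insert ha, prod_insert ha]
    have hfilter : (insert a s).filter (· < a) = ∅ :=
      filter_eq_empty_iff.2 fun x hx => by
        rcases mem_insert.1 hx with rfl | hx
        · exact lt_irrefl x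
        · exact (has x hx).not_gt
    rw [hfilter, card_empty, Nat.sub_zero, ← smul_eq_mul, ← sum_const]
    refine sum_congr rfl fun l hl => ?_
    obtain ⟨hl, hla⟩ := mem_filter.1 hl
    rw [ih (by rw [card_erase_of_mem hl, hLR, card_insert_of_notMem ha]; rfl)]
    refine prod_congr rfl fun x hx => ?_
    have hax := has x hx
    have hlx : l ∈ L.filter (· < x) := mem_filter.2 ⟨hl, hla.trans hax⟩
    rw [filter_erase, card_erase_of_mem hlx, filter_insert, if_pos hax,
      card_insert_of_notMem fun h => ha (mem_filter.1 h).1]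
    omega

end IncMatching

def VType.ofEnds (l r : Prop) [Decidable l] [Decidable r] : VType :=
  if l then (if r then transitory else opener) else (if r then closer else fixedpt)

theorem VType.ofEnds_inj {l r l' r' : Prop} [Decidable l] [Decidable r] [Decidable l']
    [Decidable r'] : ofEnds l r = ofEnds l' r' ↔ ((l ↔ l') ∧ (r ↔ r')) := by
  unfold ofEnds
  split_ifs <;> simp_all

section Ends

variable {N : ℕ} {L R : Finset ℕ}

theorem isArcDiagram_and_ends_iff {M : Finset (ℕ × ℕ)} (hL : L ⊆ Icc 1 N)
    (hR : R ⊆ Icc 1 N) :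
    (IsArcDiagram N M ∧ M.image Prod.fst = L ∧ M.image Prod.snd = R) ↔
      IsIncMatching L R M := by
  constructor
  · rintro ⟨⟨hlt, hfst, hsnd⟩, hL', hR'⟩
    exact ⟨hL', hR', hfst, hsnd, fun p hp => (hlt p hp).2.1⟩
  · rintro ⟨hL', hR', hfst, hsnd, hlt⟩
    refine ⟨⟨fun p hp => ?_, hfst, hsnd⟩, hL', hR'⟩
    have h1 := mem_Icc.1 (hL (hL' ▸ mem_image_of_mem Prod.fst hp))
    have h2 := mem_Icc.1 (hR (hR' ▸ mem_image_of_mem Prod.snd hp))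
    exact ⟨h1.1, hlt p hp, h2.2⟩

theorem card_finpartition_ends (hL : L ⊆ Icc 1 N) (hR : R ⊆ Icc 1 N) :
    Nat.card {P : Finpartition (Icc 1 N) //
      (spArcs P).image Prod.fst = L ∧ (spArcs P).image Prod.snd = R} = #(incMatchings L R) := by
  rw [← Nat.card_eq_finsetCard]
  exact Nat.card_congr <| ((spArcsEquiv N).subtypeEquiv fun _ => Iff.rfl).trans <|
    (Equiv.subtypeSubtypeEquivSubtypeInter _ _).trans <| Equiv.subtypeEquivRight fun _ =>
      (isArcDiagram_and_ends_iff hL hR).trans mem_incMatchings.symm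

theorem vtype_eq_ofEnds (P : Finpartition (Icc 1 N)) (i : ℕ) :
    vtype P i = VType.ofEnds (i ∈ (spArcs P).image Prod.fst) (i ∈ (spArcs P).image Prod.snd) :=
  rfl

theorem forall_vtype_eq_ofEnds_iff (P : Finpartition (Icc 1 N))
    (hL : L ⊆ Icc 1 N) (hR : R ⊆ Icc 1 N) :
    (∀ i ∈ Icc 1 N, vtype P i = VType.ofEnds (i ∈ L) (i ∈ R)) ↔
      (spArcs P).image Prod.fst = L ∧ (spArcs P).image Prod.snd = R := by
  have ext_on {A B : Finset ℕ} (hA : A ⊆ Icc 1 N) (hB : B ⊆ Icc 1 N) :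
      (∀ i ∈ Icc 1 N, i ∈ A ↔ i ∈ B) ↔ A = B :=
    ⟨fun h => ext fun i => ⟨fun hi => (h i (hA hi)).1 hi, fun hi => (h i (hB hi)).2 hi⟩,
      by rintro rfl; simp⟩
  have hfst : (spArcs P).image Prod.fst ⊆ Icc 1 N := fun _ h => by
    obtain ⟨p, hp, rfl⟩ := mem_image.1 h
    exact (mem_product.1 (filter_subset _ _ hp)).1
  have hsnd : (spArcs P).image Prod.snd ⊆ Icc 1 N := fun _ h => by
    obtain ⟨p, hp, rfl⟩ := mem_image.1 h
    exact (mem_product.1 (filter_subset _ _ hp)).2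
  simp only [vtype_eq_ofEnds, VType.ofEnds_inj, imp_and, forall_and]
  rw [ext_on hfst hL, ext_on hsnd hR]

end Ends

theorem card_Ico_union_Ico {a b c d : ℕ} (hbc : b ≤ c) :
    #(Ico a b ∪ Ico c d) = (b - a) + (d - c) := by
  rw [card_union_of_disjoint, Nat.card_Ico, Nat.card_Ico]
  exact disjoint_left.2 fun x h₁ h₂ => by
    simp only [mem_Ico] at h₁ h₂
    omega

theorem card_filter_lt_Ico_union_Ico {a b c d : ℕ} (hbc : b ≤ c) (r : ℕ) :
    #((Ico a b ∪ Ico c d).filter (· < r)) = (min b r - a) + (min d r - c) := by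
  rw [filter_union, Ico_filter_lt, Ico_filter_lt, card_Ico_union_Ico ((min_le_left _ _).trans hbc)]

section OCOC

variable (n k j : ℕ)

/-- Left endpoints of arcs: `n + k` openers, the transitory `n + k + 1`, then `j` openers. -/
def ococLeftEnds : Finset ℕ := Ico 1 (n + k + 2) ∪ Ico (n + 2 * k + 2) (n + 2 * k + j + 2)

/-- Right endpoints of arcs: the transitory, `k` closers, then the last `n + j` closers. -/
def ococRightEnds : Finset ℕ :=
  Ico (n + k + 1) (n + 2 * k + 2) ∪ Ico (n + 2 * k + j + 2) (2 * (n + k + j) + 2)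

theorem ococ_pattern_iff (P : Finpartition (Icc 1 (2 * (n + k + j) + 1))) :
    ((∀ i ∈ Icc 1 (2 * (n + k + j) + 1), vtype P i ≠ VType.fixedpt) ∧
      (∀ i ∈ Icc 1 (n + k), vtype P i = VType.opener) ∧
      vtype P (n + k + 1) = VType.transitory ∧
      (∀ i ∈ Icc (n + k + 2) (n + 2 * k + 1), vtype P i = VType.closer) ∧
      (∀ i ∈ Icc (n + 2 * k + 2) (n + 2 * k + j + 1), vtype P i = VType.opener) ∧
      (∀ i ∈ Icc (n + 2 * k + j + 2) (2 * (n + k + j) + 1), vtype P i = VType.closer)) ↔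
    ∀ i ∈ Icc 1 (2 * (n + k + j) + 1),
      vtype P i = VType.ofEnds (i ∈ ococLeftEnds n k j) (i ∈ ococRightEnds n k j) := by
  simp only [VType.ofEnds, ococLeftEnds, ococRightEnds, mem_union, mem_Ico, mem_Icc]
  constructor
  -- the five ranges cover `[1, 2 (n + k + j) + 1]`, so no vertex is a fixed point anyway
  · rintro ⟨-, h₁, h₂, h₃, h₄, h₅⟩ i hi
    obtain h | h | h | h | h : i ≤ n + k ∨ i = n + k + 1 ∨
        n + k + 2 ≤ i ∧ i ≤ n + 2 * k + 1 ∨ n + 2 * k + 2 ≤ i ∧ i ≤ n + 2 * k + j + 1 ∨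
        n + 2 * k + j + 2 ≤ i := by omega
    all_goals split_ifs <;> first
      | exact h₁ i ⟨by omega, by omega⟩ | exact h₃ i ⟨by omega, by omega⟩
      | exact h₄ i ⟨by omega, by omega⟩ | exact h₅ i ⟨by omega, by omega⟩
      | (rwa [show i = n + k + 1 by omega]) | omega
  · intro h
    refine ⟨fun i hi => ?_, fun i hi => ?_, ?_, fun i hi => ?_, fun i hi => ?_, fun i hi => ?_⟩
    all_goals
      first | rw [h i ⟨by omega, by omega⟩] | rw [h (n + k + 1) ⟨by omega, by omega⟩]
      split_ifs <;> first | rfl | omega | simp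

theorem ococLeftEnds_subset : ococLeftEnds n k j ⊆ Icc 1 (2 * (n + k + j) + 1) := by
  intro x hx
  simp only [ococLeftEnds, mem_union, mem_Ico] at hx
  simp only [mem_Icc]
  omega

theorem ococRightEnds_subset : ococRightEnds n k j ⊆ Icc 1 (2 * (n + k + j) + 1) := by
  intro x hx
  simp only [ococRightEnds, mem_union, mem_Ico] at hx
  simp only [mem_Icc]
  omega

theorem card_ococLeftEnds : #(ococLeftEnds n k j) = #(ococRightEnds n k j) := by
  rw [ococLeftEnds, ococRightEnds, card_Ico_union_Ico (by omega), card_Ico_union_Ico (by omega)]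
  omega

theorem prod_ococ :
    ∏ r ∈ ococRightEnds n k j,
        (#((ococLeftEnds n k j).filter (· < r)) - #((ococRightEnds n k j).filter (· < r))) =
      (n + k) * (n + k).descFactorial k * (n + j).factorial := by
  rw [prod_congr rfl fun r _ => by
    rw [ococLeftEnds, ococRightEnds, card_filter_lt_Ico_union_Ico (by omega),
      card_filter_lt_Ico_union_Ico (by omega)]]
  rw [ococRightEnds, prod_union (disjoint_left.2 fun x h₁ h₂ => by
    simp only [mem_Ico] at h₁ h₂; omega), prod_Ico_eq_prod_range, prod_Ico_eq_prod_range,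
    show n + 2 * k + 2 - (n + k + 1) = k + 1 by omega,
    show 2 * (n + k + j) + 2 - (n + 2 * k + j + 2) = n + j by omega, prod_range_succ',
    Nat.descFactorial_eq_prod_range, ← Nat.descFactorial_self, Nat.descFactorial_eq_prod_range]
  congr 1
  · rw [mul_comm]
    congr 1
    · omega
    · exact prod_congr rfl fun i hi => by rw [mem_range] at hi; omega
  · exact prod_congr rfl fun i hi => by rw [mem_range] at hi; omega

theorem ococ_formula :
    (n + k) * (n + k).descFactorial k * (n + j).factorial =
      n.factorial *
        ((n + k).choose k * k.factorial * k + (n + k).choose (k + 1) * (k + 1).factorial) *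
        ((n + j).choose j) * j.factorial := by
  have hk : (n + k).choose k * k.factorial = (n + k).descFactorial k := by
    rw [Nat.descFactorial_eq_factorial_mul_choose, mul_comm]
  have hk₁ : (n + k).choose (k + 1) * (k + 1).factorial = n * (n + k).descFactorial k := by
    rw [mul_comm, ← Nat.descFactorial_eq_factorial_mul_choose, Nat.descFactorial_succ,
      Nat.add_sub_cancel]
  have hj : (n + j).choose j * j.factorial * n.factorial = (n + j).factorial := by
    simpa using Nat.choose_mul_factorial_mul_factorial (Nat.le_add_left j n)
  rw [hk, hk₁, ← hj]
  ring

end OCOC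

theorem stmt10_general (n k j : ℕ) :
    Nat.card {P : Finpartition (Finset.Icc (1 : ℕ) (2 * (n + k + j) + 1)) //
      (∀ i ∈ Finset.Icc (1 : ℕ) (2 * (n + k + j) + 1), vtype P i ≠ VType.fixedpt) ∧
      (∀ i ∈ Finset.Icc (1 : ℕ) (n + k), vtype P i = VType.opener) ∧
      vtype P (n + k + 1) = VType.transitory ∧
      (∀ i ∈ Finset.Icc (n + k + 2) (n + 2 * k + 1), vtype P i = VType.closer) ∧
      (∀ i ∈ Finset.Icc (n + 2 * k + 2) (n + 2 * k + j + 1), vtype P i = VType.opener) ∧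
      (∀ i ∈ Finset.Icc (n + 2 * k + j + 2) (2 * (n + k + j) + 1),
        vtype P i = VType.closer)} =
    n.factorial *
      ((n + k).choose k * k.factorial * k + (n + k).choose (k + 1) * (k + 1).factorial) *
      ((n + j).choose j) * j.factorial := by
  have hL := ococLeftEnds_subset n k j
  have hR := ococRightEnds_subset n k j
  rw [← ococ_formula, ← prod_ococ, ← card_incMatchings (card_ococLeftEnds n k j),
    ← card_finpartition_ends hL hR]
  exact Nat.card_congr <| Equiv.subtypeEquivRight fun P =>
    (ococ_pattern_iff n k j P).trans (forall_vtype_eq_ofEnds_iff P hL hR)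

theorem stmt10 (n k j : ℕ) (hn : 1 ≤ n) (hj : 1 ≤ j) :
    Nat.card {P : Finpartition (Finset.Icc (1 : ℕ) (2 * (n + k + j) + 1)) //
      (∀ i ∈ Finset.Icc (1 : ℕ) (2 * (n + k + j) + 1), vtype P i ≠ VType.fixedpt) ∧
      (∀ i ∈ Finset.Icc (1 : ℕ) (n + k), vtype P i = VType.opener) ∧
      vtype P (n + k + 1) = VType.transitory ∧
      (∀ i ∈ Finset.Icc (n + k + 2) (n + 2 * k + 1), vtype P i = VType.closer) ∧
      (∀ i ∈ Finset.Icc (n + 2 * k + 2) (n + 2 * k + j + 1), vtype P i = VType.opener) ∧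
      (∀ i ∈ Finset.Icc (n + 2 * k + j + 2) (2 * (n + k + j) + 1),
        vtype P i = VType.closer)} =
    n.factorial *
      ((n + k).choose k * k.factorial * k + (n + k).choose (k + 1) * (k + 1).factorial) *
      ((n + j).choose j) * j.factorial :=
  stmt10_general n k j
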